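/- arXiv:1304.1839 — 2 statements merged into one kernel-verified Lean document; each statement's English description precedes it below -/
import Mathlib

section
/- Let a₀ > 0 and suppose that for every ξ ∈ ℝ^{2n}, R(ξ) ⪰ a₀( ‖ξ‖² I − Jξξᵀ Jᵀ ) in the sense of quadratic forms. Let z₀ ∈ ℂⁿ with ‖z₀‖ = 1 and let x ∈ ℂⁿ satisfy ⟨x,z₀⟩ real and positive. Set ζ = ι(x), ψ₀ = ι(z₀), and Π = I − Jψ₀ψ₀ᵀJᵀ (the orthogonal projection onto the orthogonal complement of Jψ₀ in ℝ^{2n}). Then Π R(ζ) Π ⪰ a₀ · ⟨x,z₀⟩² · Π. -/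
open scoped BigOperators ComplexConjugate
open Matrix

noncomputable section

/-- Inner product on `ℂⁿ`, linear in the first argument: `⟨x,y⟩ = ∑ⱼ xⱼ conj(yⱼ)`. -/
def cip {n : ℕ} (x y : Fin n → ℂ) : ℂ := ∑ j, x j * (starRingEnd ℂ) (y j)

/-- Squared Euclidean norm on `ℂⁿ`. -/
def cnSq {n : ℕ} (x : Fin n → ℂ) : ℝ := ∑ j, Complex.normSq (x j)

/-- The phaseless measurement map `α(x)ₖ = |⟨x,fₖ⟩|²`. -/
def alphaMap {n m : ℕ} (f : Fin m → Fin n → ℂ) (x : Fin n → ℂ) : Fin m → ℝ :=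
  fun k => Complex.normSq (cip x (f k))

/-- `α` is injective up to a global phase. -/
def InjUpToPhase {n m : ℕ} (f : Fin m → Fin n → ℂ) : Prop :=
  ∀ x y : Fin n → ℂ, alphaMap f x = alphaMap f y → ∃ c : ℂ, ‖c‖ = 1 ∧ y = c • x

/-- Identification `ι : ℂⁿ → ℝ²ⁿ`, `ι(x) = (Re x, Im x)`. -/
def iotaR {n : ℕ} (x : Fin n → ℂ) : Fin n ⊕ Fin n → ℝ :=
  Sum.elim (fun j => (x j).re) (fun j => (x j).im)

/-- The `2n×2n` matrix `J = [[0, −Iₙ],[Iₙ, 0]]`. -/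
def Jmat (n : ℕ) : Matrix (Fin n ⊕ Fin n) (Fin n ⊕ Fin n) ℝ :=
  Matrix.fromBlocks 0 (-1) 1 0

/-- `Φₖ = φₖφₖᵀ + Jφₖφₖᵀ Jᵀ` with `φₖ = ι(fₖ)`. -/
def PhiMat {n : ℕ} (fk : Fin n → ℂ) : Matrix (Fin n ⊕ Fin n) (Fin n ⊕ Fin n) ℝ :=
  Matrix.vecMulVec (iotaR fk) (iotaR fk)
    + Jmat n * Matrix.vecMulVec (iotaR fk) (iotaR fk) * (Jmat n)ᵀ

/-- `R(ξ) = ∑ₖ Φₖ ξξᵀ Φₖ`. -/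
def Rmat {n m : ℕ} (f : Fin m → Fin n → ℂ) (ξ : Fin n ⊕ Fin n → ℝ) :
    Matrix (Fin n ⊕ Fin n) (Fin n ⊕ Fin n) ℝ :=
  ∑ k, PhiMat (f k) * Matrix.vecMulVec ξ ξ * PhiMat (f k)

/-!
Write `v = Jζ` and `u = Jψ₀`, so that `Π = I - uuᵀ`, `‖v‖ = ‖ζ‖` and `⟨v, u⟩ = ⟨ζ, ψ₀⟩ = Re⟨x, z₀⟩`.
Compressing the hypothesis `R(ζ) ⪰ a₀(‖v‖² I - vvᵀ)` by `Π` gives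
`Π R(ζ) Π ⪰ a₀(‖v‖² Π - (Πv)(Πv)ᵀ)`, and Cauchy–Schwarz gives `(Πv)(Πv)ᵀ ⪯ ‖Πv‖² Π`
with `‖Πv‖² = ‖v‖² - ⟨v, u⟩²`.
-/

section Compression

variable {ι : Type*} [Fintype ι]

lemma mul_vecMulVec_mul {l κ o R : Type*} [Fintype κ] [CommSemiring R] (A : Matrix l ι R)
    (B : Matrix κ o R) (x : ι → R) (y : κ → R) :
    A * vecMulVec x y * B = vecMulVec (A *ᵥ x) (Bᵀ *ᵥ y) := by
  rw [mul_vecMulVec, vecMulVec_mul, mulVec_transpose]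

variable [DecidableEq ι]

lemma posSemidef_dotProduct_self_smul_one_sub_vecMulVec (b : ι → ℝ) :
    ((b ⬝ᵥ b) • (1 : Matrix ι ι ℝ) - vecMulVec b b).PosSemidef := by
  refine PosSemidef.of_dotProduct_mulVec_nonneg ?_ fun w => ?_
  · simp [IsHermitian]
  · have hCS := Finset.sum_mul_sq_le_sq_mul_sq Finset.univ b w
    simp only [star_trivial, sub_mulVec, smul_mulVec, one_mulVec, vecMulVec_mulVec,
      MulOpposite.smul_eq_mul_unop, MulOpposite.unop_op, dotProduct_sub, dotProduct_smul,
      smul_eq_mul, dotProduct_comm w b]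
    simp only [dotProduct, ← sq] at hCS ⊢
    nlinarith

variable {u : ι → ℝ}

lemma one_sub_vecMulVec_mul_self (hu : u ⬝ᵥ u = 1) :
    (1 - vecMulVec u u) * (1 - vecMulVec u u) = 1 - vecMulVec u u := by
  rw [sub_mul, mul_sub, mul_sub, vecMulVec_mul_vecMulVec, hu, one_smul]
  noncomm_ring

lemma dotProduct_one_sub_vecMulVec_mulVec_self (hu : u ⬝ᵥ u = 1) (v : ι → ℝ) :
    (1 - vecMulVec u u) *ᵥ v ⬝ᵥ (1 - vecMulVec u u) *ᵥ v = v ⬝ᵥ v - (v ⬝ᵥ u) ^ 2 := by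
  simp only [sub_mulVec, one_mulVec, vecMulVec_mulVec, MulOpposite.smul_eq_mul_unop,
    MulOpposite.unop_op, dotProduct_sub, sub_dotProduct, dotProduct_smul, smul_dotProduct, hu,
    dotProduct_comm u v]
  ring

theorem posSemidef_proj_mul_mul_proj_sub (hu : u ⬝ᵥ u = 1) {v : ι → ℝ} {a : ℝ} (ha : 0 ≤ a)
    {M : Matrix ι ι ℝ} (hM : (M - a • ((v ⬝ᵥ v) • 1 - vecMulVec v v)).PosSemidef) :
    ((1 - vecMulVec u u) * M * (1 - vecMulVec u u)
      - (a * (v ⬝ᵥ u) ^ 2) • (1 - vecMulVec u u)).PosSemidef := by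
  set P : Matrix ι ι ℝ := 1 - vecMulVec u u
  have hPT : Pᵀ = P := by simp [P, transpose_vecMulVec]
  have hPH : Pᴴ = P := by rw [conjTranspose_eq_transpose_of_trivial, hPT]
  have hPP : P * P = P := one_sub_vecMulVec_mul_self hu
  have hPV : P * vecMulVec v v * P = vecMulVec (P *ᵥ v) (P *ᵥ v) := by
    rw [mul_vecMulVec_mul, hPT]
  have hPW : P * vecMulVec (P *ᵥ v) (P *ᵥ v) * P = vecMulVec (P *ᵥ v) (P *ᵥ v) := by
    rw [mul_vecMulVec_mul, hPT, mulVec_mulVec, hPP]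
  have hPv : P *ᵥ v ⬝ᵥ P *ᵥ v = v ⬝ᵥ v - (v ⬝ᵥ u) ^ 2 :=
    dotProduct_one_sub_vecMulVec_mulVec_self hu v
  have hdecomp : P * M * P - (a * (v ⬝ᵥ u) ^ 2) • P
      = P * (M - a • ((v ⬝ᵥ v) • 1 - vecMulVec v v)) * Pᴴ
        + a • (P * ((P *ᵥ v ⬝ᵥ P *ᵥ v) • 1 - vecMulVec (P *ᵥ v) (P *ᵥ v)) * Pᴴ) := by
    simp only [hPH, Matrix.mul_sub, Matrix.sub_mul, Matrix.mul_smul, Matrix.smul_mul,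
      Matrix.mul_one, hPP, hPV, hPW, hPv]
    module
  rw [hdecomp]
  exact (hM.mul_mul_conjTranspose_same P).add
    (((posSemidef_dotProduct_self_smul_one_sub_vecMulVec _).mul_mul_conjTranspose_same P).smul ha)

end Compression

lemma Jmat_transpose_mul_self (n : ℕ) : (Jmat n)ᵀ * Jmat n = 1 := by
  simp [Jmat, fromBlocks_transpose, fromBlocks_multiply]

lemma Jmat_mulVec_dotProduct {n : ℕ} (a b : Fin n ⊕ Fin n → ℝ) :
    Jmat n *ᵥ a ⬝ᵥ Jmat n *ᵥ b = a ⬝ᵥ b := by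
  rw [dotProduct_mulVec, ← mulVec_transpose, mulVec_mulVec, Jmat_transpose_mul_self, one_mulVec]

lemma Jmat_mul_vecMulVec_mul_transpose {n : ℕ} (ξ : Fin n ⊕ Fin n → ℝ) :
    Jmat n * vecMulVec ξ ξ * (Jmat n)ᵀ = vecMulVec (Jmat n *ᵥ ξ) (Jmat n *ᵥ ξ) := by
  rw [mul_vecMulVec_mul, transpose_transpose]

lemma iotaR_dotProduct {n : ℕ} (x y : Fin n → ℂ) : iotaR x ⬝ᵥ iotaR y = (cip x y).re := by
  simp [iotaR, cip, dotProduct, Fintype.sum_sum_type, Complex.re_sum, Complex.mul_re,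
    Finset.sum_add_distrib]

lemma iotaR_dotProduct_self {n : ℕ} (x : Fin n → ℂ) : iotaR x ⬝ᵥ iotaR x = cnSq x := by
  simp [iotaR, cnSq, dotProduct, Fintype.sum_sum_type, Complex.normSq_apply,
    Finset.sum_add_distrib]

theorem stmt15_general (n m : ℕ) (f : Fin m → Fin n → ℂ)
    (a₀ : ℝ) (ha₀ : 0 < a₀)
    (hR : ∀ ξ : Fin n ⊕ Fin n → ℝ,
      (Rmat f ξ - a₀ • ((∑ i, ξ i ^ 2) • (1 : Matrix (Fin n ⊕ Fin n) (Fin n ⊕ Fin n) ℝ)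
          - Jmat n * Matrix.vecMulVec ξ ξ * (Jmat n)ᵀ)).PosSemidef)
    (z₀ x : Fin n → ℂ) (hz₀ : cnSq z₀ = 1) :
    ((1 - Jmat n * Matrix.vecMulVec (iotaR z₀) (iotaR z₀) * (Jmat n)ᵀ)
          * Rmat f (iotaR x)
          * (1 - Jmat n * Matrix.vecMulVec (iotaR z₀) (iotaR z₀) * (Jmat n)ᵀ)
        - (a₀ * (cip x z₀).re ^ 2) •
            (1 - Jmat n * Matrix.vecMulVec (iotaR z₀) (iotaR z₀) * (Jmat n)ᵀ)).PosSemidef := by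
  have hu : Jmat n *ᵥ iotaR z₀ ⬝ᵥ Jmat n *ᵥ iotaR z₀ = 1 := by
    rw [Jmat_mulVec_dotProduct, iotaR_dotProduct_self, hz₀]
  have hvu : Jmat n *ᵥ iotaR x ⬝ᵥ Jmat n *ᵥ iotaR z₀ = (cip x z₀).re := by
    rw [Jmat_mulVec_dotProduct, iotaR_dotProduct]
  have hnorm : ∑ i, iotaR x i ^ 2 = Jmat n *ᵥ iotaR x ⬝ᵥ Jmat n *ᵥ iotaR x := by
    rw [Jmat_mulVec_dotProduct]
    simp [dotProduct, sq]
  have hRx := hR (iotaR x)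
  rw [hnorm, Jmat_mul_vecMulVec_mul_transpose] at hRx
  rw [Jmat_mul_vecMulVec_mul_transpose, ← hvu]
  exact posSemidef_proj_mul_mul_proj_sub hu ha₀.le hRx

/-- Suppose `R(ξ) ⪰ a₀(‖ξ‖² I − Jξξᵀ Jᵀ)` for all `ξ`, with `a₀ > 0`.
Let `‖z₀‖ = 1` and let `x` satisfy `⟨x,z₀⟩` real and positive. With `ζ = ι(x)`, `ψ₀ = ι(z₀)`
and `Π = I − Jψ₀ψ₀ᵀJᵀ`, one has `Π R(ζ) Π ⪰ a₀ ⟨x,z₀⟩² Π`. -/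
theorem stmt15 (n m : ℕ) (f : Fin m → Fin n → ℂ)
    (hspan : Submodule.span ℂ (Set.range f) = ⊤)
    (a₀ : ℝ) (ha₀ : 0 < a₀)
    (hR : ∀ ξ : Fin n ⊕ Fin n → ℝ,
      (Rmat f ξ - a₀ • ((∑ i, ξ i ^ 2) • (1 : Matrix (Fin n ⊕ Fin n) (Fin n ⊕ Fin n) ℝ)
          - Jmat n * Matrix.vecMulVec ξ ξ * (Jmat n)ᵀ)).PosSemidef)
    (z₀ x : Fin n → ℂ) (hz₀ : cnSq z₀ = 1)
    (him : (cip x z₀).im = 0) (hre : 0 < (cip x z₀).re) :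
    ((1 - Jmat n * Matrix.vecMulVec (iotaR z₀) (iotaR z₀) * (Jmat n)ᵀ)
          * Rmat f (iotaR x)
          * (1 - Jmat n * Matrix.vecMulVec (iotaR z₀) (iotaR z₀) * (Jmat n)ᵀ)
        - (a₀ * (cip x z₀).re ^ 2) •
            (1 - Jmat n * Matrix.vecMulVec (iotaR z₀) (iotaR z₀) * (Jmat n)ᵀ)).PosSemidef :=
  stmt15_general n m f a₀ ha₀ hR z₀ x hz₀
end
end

section
/- Let A₃ > 0 satisfy A₃‖X − Y‖₁² ≤ ‖A(X) − A(Y)‖² for all X ∈ S^{1,1} and Y ∈ S^{1,0}. Fix λ, μ ≥ 0, x ∈ ℂⁿ, ν ∈ ℝ^m, and set y = α(x) + ν. If u, v ∈ ℂⁿ satisfy J(u,v,λ,μ) ≤ J(x,x,λ,μ), then ‖[u,v] − xx*‖₁ ≤ 2λ/A₃ + 2√( λ²/A₃² + ‖ν‖²/A₃ ) ≤ 4λ/A₃ + 2‖ν‖/√A₃. -/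
open scoped BigOperators ComplexConjugate
open Matrix

noncomputable section

/-- Number of strictly positive eigenvalues (with multiplicity) of a Hermitian matrix. -/
def posCount {n : ℕ} {𝕜 : Type*} [RCLike 𝕜] {X : Matrix (Fin n) (Fin n) 𝕜}
    (hX : X.IsHermitian) : ℕ :=
  Nat.card {i // 0 < hX.eigenvalues i}

/-- Number of strictly negative eigenvalues (with multiplicity) of a Hermitian matrix. -/
def negCount {n : ℕ} {𝕜 : Type*} [RCLike 𝕜] {X : Matrix (Fin n) (Fin n) 𝕜}
    (hX : X.IsHermitian) : ℕ :=
  Nat.card {i // hX.eigenvalues i < 0}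

/-- Nuclear norm of a Hermitian matrix: sum of absolute values of eigenvalues. -/
def nucNorm {n : ℕ} {𝕜 : Type*} [RCLike 𝕜] {X : Matrix (Fin n) (Fin n) 𝕜}
    (hX : X.IsHermitian) : ℝ :=
  ∑ i, |hX.eigenvalues i|

/-- Rank-one operator `u v*`, with entries `uᵢ conj(vⱼ)`. -/
def outer {n : ℕ} (u v : Fin n → ℂ) : Matrix (Fin n) (Fin n) ℂ :=
  Matrix.vecMulVec u (star v)

/-- Symmetric outer product `[u,v] = ½(uv* + vu*)`. -/
def symOuter {n : ℕ} (u v : Fin n → ℂ) : Matrix (Fin n) (Fin n) ℂ :=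
  (1/2 : ℂ) • (outer u v + outer v u)

/-- The linear map `A` on Hermitian matrices, `A(T)ₖ = ⟨Tfₖ,fₖ⟩`. -/
def AcMap {n m : ℕ} (f : Fin m → Fin n → ℂ) (X : Matrix (Fin n) (Fin n) ℂ) : Fin m → ℝ :=
  fun k => (cip (X.mulVec (f k)) (f k)).re

/-- The regularized least-square criterion
`J(u,v,λ,μ) = ∑ₖ|yₖ − ½(⟨u,fₖ⟩⟨fₖ,v⟩+⟨v,fₖ⟩⟨fₖ,u⟩)|² + λ‖u‖² + μ‖u−v‖² + λ‖v‖²`. -/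
def Jfun {n m : ℕ} (f : Fin m → Fin n → ℂ) (y : Fin m → ℝ) (lam mu : ℝ)
    (u v : Fin n → ℂ) : ℝ :=
  ∑ k, Complex.normSq ((y k : ℂ)
      - (1/2 : ℂ) * (cip u (f k) * cip (f k) v + cip v (f k) * cip (f k) u))
    + lam * cnSq u + mu * cnSq (u - v) + lam * cnSq v

/-! The quadratic form of `[u,v]` vanishes on `v⊥`, so `[u,v] ∈ S^{1,1}`, while `xx* ∈ S^{1,0}`;
the hypothesis therefore gives `A₃ δ² ≤ ‖A([u,v]) − α(x)‖²` for `δ = ‖[u,v] − xx*‖₁`.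
Since `J(x,x) = ‖ν‖² + 2λ‖x‖²`, comparing it with `J(u,v)` bounds the misfit `‖y − A([u,v])‖²`
by `‖ν‖² + λ(2‖x‖² − ‖u‖² − ‖v‖²)`, and `‖u‖² + ‖v‖² ≥ 2 Re⟨u,v⟩ = 2 tr [u,v]` bounds the last
term by `2λ (tr xx* − tr [u,v]) ≤ 2λδ`. Altogether `A₃ δ² ≤ 4‖ν‖² + 4λδ`, a quadratic inequality
whose larger root is the claimed bound. -/

namespace Matrix.IsHermitian

variable {𝕜 ι : Type*} [RCLike 𝕜] [Fintype ι] [DecidableEq ι] {W : Matrix ι ι 𝕜}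

lemma star_eigenvectorBasis_dotProduct (hW : W.IsHermitian) (k l : ι) :
    star ⇑(hW.eigenvectorBasis k) ⬝ᵥ ⇑(hW.eigenvectorBasis l) = if k = l then 1 else 0 := by
  rw [dotProduct_comm, ← EuclideanSpace.inner_eq_star_dotProduct]
  exact orthonormal_iff_ite.mp hW.eigenvectorBasis.orthonormal k l

lemma quadForm_eigenvectorBasis_add (hW : W.IsHermitian) {i j : ι} (hij : i ≠ j) (c d : 𝕜) :
    star (c • ⇑(hW.eigenvectorBasis i) + d • ⇑(hW.eigenvectorBasis j)) ⬝ᵥ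
        (W *ᵥ (c • ⇑(hW.eigenvectorBasis i) + d • ⇑(hW.eigenvectorBasis j)))
      = ((‖c‖ ^ 2 * hW.eigenvalues i + ‖d‖ ^ 2 * hW.eigenvalues j : ℝ) : 𝕜) := by
  simp only [mulVec_add, mulVec_smul, mulVec_eigenvectorBasis, star_add, star_smul,
    add_dotProduct, smul_dotProduct, dotProduct_add, dotProduct_smul,
    star_eigenvectorBasis_dotProduct, if_neg hij, if_neg hij.symm, if_pos, smul_eq_mul,
    RCLike.real_smul_eq_coe_smul (K := 𝕜)]
  push_cast
  simp only [RCLike.star_def]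
  linear_combination (hW.eigenvalues i : 𝕜) * RCLike.mul_conj c
    + (hW.eigenvalues j : 𝕜) * RCLike.mul_conj d

/-- Used with `s = ±1`: two eigenvalues of the same sign would make the quadratic form definite
on a plane, but every plane meets `v⊥`. -/
lemma eq_of_pos_mul_eigenvalues (hW : W.IsHermitian) (v : ι → 𝕜)
    (h0 : ∀ w, star v ⬝ᵥ w = 0 → star w ⬝ᵥ (W *ᵥ w) = 0) (s : ℝ) {i j : ι}
    (hi : 0 < s * hW.eigenvalues i) (hj : 0 < s * hW.eigenvalues j) : i = j := by
  by_contra hij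
  set a := star v ⬝ᵥ ⇑(hW.eigenvectorBasis i)
  set b := star v ⬝ᵥ ⇑(hW.eigenvectorBasis j)
  obtain ⟨c, d, hcd, hne⟩ : ∃ c d : 𝕜, c * a + d * b = 0 ∧ (c ≠ 0 ∨ d ≠ 0) := by
    by_cases hb : b = 0
    · exact ⟨0, 1, by simp [hb], by simp⟩
    · exact ⟨b, -a, by ring, Or.inl hb⟩
  have hq := h0 (c • ⇑(hW.eigenvectorBasis i) + d • ⇑(hW.eigenvectorBasis j))
    (by rw [dotProduct_add, dotProduct_smul, dotProduct_smul]; exact hcd)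
  rw [quadForm_eigenvectorBasis_add hW hij c d, RCLike.ofReal_eq_zero] at hq
  have hs : ‖c‖ ^ 2 * (s * hW.eigenvalues i) + ‖d‖ ^ 2 * (s * hW.eigenvalues j) = 0 := by
    linear_combination s * hq
  rcases hne with hc0 | hd0
  · have := mul_pos (pow_pos (norm_pos_iff.mpr hc0) 2) hi
    nlinarith [mul_nonneg (sq_nonneg ‖d‖) hj.le]
  · have := mul_pos (pow_pos (norm_pos_iff.mpr hd0) 2) hj
    nlinarith [mul_nonneg (sq_nonneg ‖c‖) hi.le]

end Matrix.IsHermitian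

section HermitianSpectrum

variable {𝕜 : Type*} [RCLike 𝕜] {n : ℕ} {W : Matrix (Fin n) (Fin n) 𝕜}

lemma posCount_le_one_of_quadForm_eq_zero (hW : W.IsHermitian) (v : Fin n → 𝕜)
    (h0 : ∀ w, star v ⬝ᵥ w = 0 → star w ⬝ᵥ (W *ᵥ w) = 0) : posCount hW ≤ 1 :=
  Finite.card_le_one_iff_subsingleton.mpr ⟨fun p q => Subtype.ext <|
    hW.eq_of_pos_mul_eigenvalues v h0 1 (by simpa using p.2) (by simpa using q.2)⟩

lemma negCount_le_one_of_quadForm_eq_zero (hW : W.IsHermitian) (v : Fin n → 𝕜)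
    (h0 : ∀ w, star v ⬝ᵥ w = 0 → star w ⬝ᵥ (W *ᵥ w) = 0) : negCount hW ≤ 1 :=
  Finite.card_le_one_iff_subsingleton.mpr ⟨fun p q => Subtype.ext <|
    hW.eq_of_pos_mul_eigenvalues v h0 (-1) (by simpa using p.2) (by simpa using q.2)⟩

open scoped ComplexOrder in
lemma negCount_eq_zero_of_posSemidef (hW : W.PosSemidef) : negCount hW.isHermitian = 0 := by
  rw [negCount, Nat.card_eq_zero]
  exact Or.inl ⟨fun p => (hW.eigenvalues_nonneg p.1).not_gt p.2⟩

lemma abs_re_trace_le_nucNorm (hW : W.IsHermitian) : |RCLike.re W.trace| ≤ nucNorm hW := by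
  rw [hW.trace_eq_sum_eigenvalues, map_sum]
  simp only [RCLike.ofReal_re]
  exact Finset.abs_sum_le_sum_abs _ _

end HermitianSpectrum

section OuterProducts

variable {n : ℕ}

lemma cip_eq_star_dotProduct (a b : Fin n → ℂ) : cip a b = star b ⬝ᵥ a :=
  Finset.sum_congr rfl fun _ _ => mul_comm _ _

lemma conj_cip (a b : Fin n → ℂ) : conj (cip a b) = cip b a := by
  simp [cip, mul_comm]

lemma cip_self (a : Fin n → ℂ) : cip a a = cnSq a := by
  simp [cip, cnSq, Complex.mul_conj]

lemma cnSq_nonneg (a : Fin n → ℂ) : 0 ≤ cnSq a :=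
  Finset.sum_nonneg fun _ _ => Complex.normSq_nonneg _

lemma cnSq_sub (a b : Fin n → ℂ) : cnSq (a - b) = cnSq a + cnSq b - 2 * (cip a b).re := by
  simp only [cnSq, cip, Pi.sub_apply, Complex.normSq_sub, Complex.re_sum, Finset.sum_sub_distrib,
    Finset.sum_add_distrib, Finset.mul_sum]

lemma two_mul_re_cip_le (a b : Fin n → ℂ) : 2 * (cip a b).re ≤ cnSq a + cnSq b := by
  linarith [cnSq_sub a b, cnSq_nonneg (a - b)]

/-- `½(⟨u,w⟩⟨w,v⟩ + ⟨v,w⟩⟨w,u⟩)` is real: its two terms are complex conjugates. -/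
lemma symForm_eq_re (u v w : Fin n → ℂ) :
    (1/2 : ℂ) * (cip u w * cip w v + cip v w * cip w u) = ((cip u w * cip w v).re : ℂ) := by
  rw [← conj_cip w v, ← conj_cip u w, ← map_mul, mul_comm (cip w v),
    Complex.re_eq_add_conj]
  ring

lemma symOuter_mulVec (u v w : Fin n → ℂ) :
    symOuter u v *ᵥ w = (1/2 : ℂ) • (cip w v • u + cip w u • v) := by
  simp [symOuter, outer, add_mulVec, smul_mulVec, vecMulVec_mulVec, cip_eq_star_dotProduct]

lemma cip_symOuter_mulVec (u v w : Fin n → ℂ) :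
    cip (symOuter u v *ᵥ w) w = (1/2 : ℂ) * (cip u w * cip w v + cip v w * cip w u) := by
  simp only [symOuter_mulVec, cip_eq_star_dotProduct, dotProduct_smul, dotProduct_add, smul_eq_mul]
  ring

lemma symOuter_isHermitian (u v : Fin n → ℂ) : (symOuter u v).IsHermitian := by
  simp only [IsHermitian, symOuter, outer, conjTranspose_smul, conjTranspose_add,
    conjTranspose_vecMulVec, star_star, add_comm (vecMulVec v (star u))]
  norm_num

lemma symOuter_self (x : Fin n → ℂ) : symOuter x x = outer x x := by
  rw [symOuter, ← two_smul ℂ (outer x x), smul_smul]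
  norm_num

lemma trace_symOuter (u v : Fin n → ℂ) : (symOuter u v).trace = (cip u v).re := by
  have h : (symOuter u v).trace = (1/2 : ℂ) * (cip u v + cip v u) := by
    simp [symOuter, outer, trace_vecMulVec, cip_eq_star_dotProduct, dotProduct_comm, mul_add]
  rw [h, ← conj_cip u v, Complex.add_conj]
  push_cast
  ring

lemma trace_outer_self (x : Fin n → ℂ) : (outer x x).trace = cnSq x := by
  rw [outer, trace_vecMulVec, dotProduct_comm, ← cip_eq_star_dotProduct, cip_self]

lemma outer_self_isHermitian (x : Fin n → ℂ) : (outer x x).IsHermitian :=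
  symOuter_self x ▸ symOuter_isHermitian x x

lemma quadForm_symOuter_eq_zero (u v w : Fin n → ℂ) (hw : star v ⬝ᵥ w = 0) :
    star w ⬝ᵥ (symOuter u v *ᵥ w) = 0 := by
  have hwv : cip w v = 0 := (cip_eq_star_dotProduct w v).trans hw
  have hvw : cip v w = 0 := by rw [← conj_cip, hwv, map_zero]
  rw [← cip_eq_star_dotProduct, cip_symOuter_mulVec, hwv, hvw]
  ring

lemma posCount_symOuter_le_one (u v : Fin n → ℂ) (hX : (symOuter u v).IsHermitian) :
    posCount hX ≤ 1 :=
  posCount_le_one_of_quadForm_eq_zero hX v (quadForm_symOuter_eq_zero u v)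

lemma negCount_symOuter_le_one (u v : Fin n → ℂ) (hX : (symOuter u v).IsHermitian) :
    negCount hX ≤ 1 :=
  negCount_le_one_of_quadForm_eq_zero hX v (quadForm_symOuter_eq_zero u v)

lemma posCount_outer_self_le_one (x : Fin n → ℂ) (hY : (outer x x).IsHermitian) :
    posCount hY ≤ 1 := by
  refine posCount_le_one_of_quadForm_eq_zero hY x fun w hw => ?_
  simpa only [symOuter_self] using quadForm_symOuter_eq_zero x x w hw

open scoped ComplexOrder in
lemma negCount_outer_self (x : Fin n → ℂ) (hY : (outer x x).IsHermitian) : negCount hY = 0 :=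
  negCount_eq_zero_of_posSemidef (posSemidef_vecMulVec_self_star x)

lemma two_mul_cnSq_sub_le_nucNorm (u v x : Fin n → ℂ)
    (h : (symOuter u v - outer x x).IsHermitian) :
    2 * cnSq x - (cnSq u + cnSq v) ≤ 2 * nucNorm h := by
  have htr := abs_re_trace_le_nucNorm h
  rw [trace_sub, trace_symOuter, trace_outer_self] at htr
  simp only [RCLike.re_to_complex, Complex.sub_re, Complex.ofReal_re] at htr
  linarith [neg_abs_le ((cip u v).re - cnSq x), two_mul_re_cip_le u v]

end OuterProducts

section Measurements

variable {n m : ℕ} (f : Fin m → Fin n → ℂ)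

lemma AcMap_symOuter (u v : Fin n → ℂ) (k : Fin m) :
    AcMap f (symOuter u v) k = (cip u (f k) * cip (f k) v).re := by
  rw [AcMap, cip_symOuter_mulVec, symForm_eq_re, Complex.ofReal_re]

lemma AcMap_outer_self (x : Fin n → ℂ) (k : Fin m) : AcMap f (outer x x) k = alphaMap f x k := by
  rw [← symOuter_self, AcMap_symOuter, ← conj_cip x (f k), Complex.mul_conj, Complex.ofReal_re,
    alphaMap]

lemma Jfun_eq (y : Fin m → ℝ) (lam mu : ℝ) (u v : Fin n → ℂ) :
    Jfun f y lam mu u v = ∑ k, (y k - AcMap f (symOuter u v) k) ^ 2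
      + lam * cnSq u + mu * cnSq (u - v) + lam * cnSq v := by
  simp only [Jfun, symForm_eq_re, AcMap_symOuter, ← Complex.ofReal_sub, Complex.normSq_ofReal, sq]

lemma Jfun_self (y : Fin m → ℝ) (lam mu : ℝ) (x : Fin n → ℂ) :
    Jfun f y lam mu x x = ∑ k, (y k - alphaMap f x k) ^ 2 + 2 * lam * cnSq x := by
  rw [Jfun_eq, symOuter_self, sub_self, show cnSq (0 : Fin n → ℂ) = 0 by simp [cnSq]]
  simp only [AcMap_outer_self]
  ring

lemma misfit_add_le_of_Jfun_le {y : Fin m → ℝ} {lam mu : ℝ} (hmu : 0 ≤ mu) {x u v : Fin n → ℂ}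
    (hJ : Jfun f y lam mu u v ≤ Jfun f y lam mu x x) :
    ∑ k, (y k - AcMap f (symOuter u v) k) ^ 2 + lam * (cnSq u + cnSq v)
      ≤ ∑ k, (y k - alphaMap f x k) ^ 2 + 2 * lam * cnSq x := by
  rw [Jfun_eq, Jfun_self] at hJ
  nlinarith [mul_nonneg hmu (cnSq_nonneg (u - v))]

end Measurements

section RealInequalities

lemma sum_sq_sub_le {ι : Type*} (s : Finset ι) (a b c : ι → ℝ) :
    ∑ k ∈ s, (a k - b k) ^ 2 ≤ 2 * ∑ k ∈ s, (c k - a k) ^ 2 + 2 * ∑ k ∈ s, (c k - b k) ^ 2 := by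
  rw [Finset.mul_sum, Finset.mul_sum, ← Finset.sum_add_distrib]
  exact Finset.sum_le_sum fun k _ => by nlinarith [sq_nonneg (a k + b k - 2 * c k)]

/-- The larger root of `A t² - 4λ t - 4N` bounds every `δ` at which this quadratic is `≤ 0`. -/
lemma le_of_mul_sq_le {A lam N δ : ℝ} (hA : 0 < A) (h : A * δ ^ 2 ≤ 4 * N + 4 * lam * δ) :
    δ ≤ 2 * lam / A + 2 * √(lam ^ 2 / A ^ 2 + N / A) := by
  have hdisc : lam ^ 2 / A ^ 2 + N / A = ((A * δ - 2 * lam) / (2 * A)) ^ 2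
      + (4 * N + 4 * lam * δ - A * δ ^ 2) / (4 * A) := by
    field_simp
    ring
  have hsq : (A * δ - 2 * lam) / (2 * A) ≤ √(lam ^ 2 / A ^ 2 + N / A) := by
    apply Real.le_sqrt_of_sq_le
    rw [hdisc]
    have : 0 ≤ (4 * N + 4 * lam * δ - A * δ ^ 2) / (4 * A) := div_nonneg (by linarith) (by linarith)
    linarith
  rw [div_le_iff₀ (by positivity)] at hsq
  rw [div_add' _ _ _ hA.ne', le_div_iff₀ hA]
  nlinarith

lemma Real.sqrt_add_le_add_sqrt {a b : ℝ} (ha : 0 ≤ a) (hb : 0 ≤ b) : √(a + b) ≤ √a + √b := by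
  rw [Real.sqrt_le_left (by positivity)]
  nlinarith [Real.sq_sqrt ha, Real.sq_sqrt hb, Real.sqrt_nonneg a, Real.sqrt_nonneg b]

lemma larger_root_le {A lam N : ℝ} (hA : 0 < A) (hlam : 0 ≤ lam) (hN : 0 ≤ N) :
    2 * lam / A + 2 * √(lam ^ 2 / A ^ 2 + N / A) ≤ 4 * lam / A + 2 * √N / √A := by
  have h := Real.sqrt_add_le_add_sqrt (by positivity : 0 ≤ lam ^ 2 / A ^ 2)
    (by positivity : 0 ≤ N / A)
  have hlamA : √(lam ^ 2 / A ^ 2) = lam / A := by rw [← div_pow, Real.sqrt_sq (by positivity)]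
  rw [hlamA, Real.sqrt_div' _ hA.le] at h
  linarith [show 4 * lam / A = 2 * lam / A + 2 * (lam / A) by ring,
    show 2 * √N / √A = 2 * (√N / √A) by ring]

end RealInequalities

theorem stmt19_general (n m : ℕ) (f : Fin m → Fin n → ℂ)
    (A₃ : ℝ) (hA₃ : 0 < A₃)
    (hLip : ∀ (X Y : Matrix (Fin n) (Fin n) ℂ) (hX : X.IsHermitian) (hY : Y.IsHermitian)
        (hXY : (X - Y).IsHermitian),
        posCount hX ≤ 1 → negCount hX ≤ 1 → posCount hY ≤ 1 → negCount hY ≤ 0 →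
        A₃ * nucNorm hXY ^ 2 ≤ ∑ k, (AcMap f X k - AcMap f Y k) ^ 2)
    (lam mu : ℝ) (hlam : 0 ≤ lam) (hmu : 0 ≤ mu)
    (x : Fin n → ℂ) (ν y : Fin m → ℝ) (hy : y = fun k => alphaMap f x k + ν k)
    (u v : Fin n → ℂ)
    (hJ : Jfun f y lam mu u v ≤ Jfun f y lam mu x x)
    (huv : (symOuter u v - outer x x).IsHermitian) :
    nucNorm huv ≤ 2 * lam / A₃ + 2 * Real.sqrt (lam ^ 2 / A₃ ^ 2 + (∑ k, ν k ^ 2) / A₃)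
    ∧ 2 * lam / A₃ + 2 * Real.sqrt (lam ^ 2 / A₃ ^ 2 + (∑ k, ν k ^ 2) / A₃)
        ≤ 4 * lam / A₃ + 2 * Real.sqrt (∑ k, ν k ^ 2) / Real.sqrt A₃ := by
  have hlip := hLip _ _ (symOuter_isHermitian u v) (outer_self_isHermitian x) huv
    (posCount_symOuter_le_one u v _) (negCount_symOuter_le_one u v _)
    (posCount_outer_self_le_one x _) (negCount_outer_self x _).le
  have hnoise : ∀ k, y k - alphaMap f x k = ν k := by simp [hy]
  have hfit := misfit_add_le_of_Jfun_le f hmu hJ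
  have hmismatch := sum_sq_sub_le Finset.univ (AcMap f (symOuter u v)) (alphaMap f x) y
  simp only [AcMap_outer_self] at hlip
  simp only [hnoise] at hfit hmismatch
  have hquad : A₃ * nucNorm huv ^ 2 ≤ 4 * ∑ k, ν k ^ 2 + 4 * lam * nucNorm huv := by
    nlinarith [mul_le_mul_of_nonneg_left (two_mul_cnSq_sub_le_nucNorm u v x huv) hlam]
  exact ⟨le_of_mul_sq_le hA₃ hquad,
    larger_root_le hA₃ hlam (Finset.sum_nonneg fun k _ => sq_nonneg (ν k))⟩

/-- Suppose `A₃ > 0` satisfies `A₃‖X − Y‖₁² ≤ ‖A(X) − A(Y)‖²` for all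
`X ∈ S^{1,1}`, `Y ∈ S^{1,0}`. Fix `λ, μ ≥ 0`, `x ∈ ℂⁿ`, `ν ∈ ℝᵐ` and `y = α(x) + ν`.
If `J(u,v,λ,μ) ≤ J(x,x,λ,μ)` then
`‖[u,v] − xx*‖₁ ≤ 2λ/A₃ + 2√(λ²/A₃² + ‖ν‖²/A₃) ≤ 4λ/A₃ + 2‖ν‖/√A₃`. -/
theorem stmt19 (n m : ℕ) (f : Fin m → Fin n → ℂ)
    (hspan : Submodule.span ℂ (Set.range f) = ⊤)
    (A₃ : ℝ) (hA₃ : 0 < A₃)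
    (hLip : ∀ (X Y : Matrix (Fin n) (Fin n) ℂ) (hX : X.IsHermitian) (hY : Y.IsHermitian)
        (hXY : (X - Y).IsHermitian),
        posCount hX ≤ 1 → negCount hX ≤ 1 → posCount hY ≤ 1 → negCount hY ≤ 0 →
        A₃ * nucNorm hXY ^ 2 ≤ ∑ k, (AcMap f X k - AcMap f Y k) ^ 2)
    (lam mu : ℝ) (hlam : 0 ≤ lam) (hmu : 0 ≤ mu)
    (x : Fin n → ℂ) (ν y : Fin m → ℝ) (hy : y = fun k => alphaMap f x k + ν k)
    (u v : Fin n → ℂ)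
    (hJ : Jfun f y lam mu u v ≤ Jfun f y lam mu x x)
    (huv : (symOuter u v - outer x x).IsHermitian) :
    nucNorm huv ≤ 2 * lam / A₃ + 2 * Real.sqrt (lam ^ 2 / A₃ ^ 2 + (∑ k, ν k ^ 2) / A₃)
    ∧ 2 * lam / A₃ + 2 * Real.sqrt (lam ^ 2 / A₃ ^ 2 + (∑ k, ν k ^ 2) / A₃)
        ≤ 4 * lam / A₃ + 2 * Real.sqrt (∑ k, ν k ^ 2) / Real.sqrt A₃ :=
  stmt19_general n m f A₃ hA₃ hLip lam mu hlam hmu x ν y hy u v hJ huv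
end
end
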